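/- arXiv:2204.10975 — 2 statements merged into one kernel-verified Lean document; each statement's English description precedes it below -/
import Mathlib

section
/- Let V ⊆ ℝ^d be a linear subspace, c ∈ ℝ^d, r > 0, and let S = {y ∈ c + V : ‖y − c‖ = r} be a sphere contained in the affine subspace c + V. Then for any x ∈ ℝ^d, the squared distance from x to S decomposes as d(x,S)² = ‖x − c − P_V(x − c)‖² + (‖P_V(x − c)‖ − r)², where P_V is the orthogonal projection onto V, provided P_V(x − c) ≠ 0. -/
open Metric RealInnerProductSpace

/-- Pythagorean decomposition of the squared distance from a point to a sphere
lying in the affine subspace c + V. -/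
theorem stmt1 (d : ℕ) (V : Submodule ℝ (EuclideanSpace ℝ (Fin d)))
    (c x : EuclideanSpace ℝ (Fin d)) (r : ℝ) (hr : 0 < r)
    (hP : (V.orthogonalProjectionOnto (x - c) : EuclideanSpace ℝ (Fin d)) ≠ 0) :
    (Metric.infDist x {y : EuclideanSpace ℝ (Fin d) | y - c ∈ V ∧ ‖y - c‖ = r}) ^ 2 =
      ‖x - c - (V.orthogonalProjectionOnto (x - c) : EuclideanSpace ℝ (Fin d))‖ ^ 2 +
      (‖(V.orthogonalProjectionOnto (x - c) : EuclideanSpace ℝ (Fin d))‖ - r) ^ 2 := by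
  set p : EuclideanSpace ℝ (Fin d) := (V.orthogonalProjectionOnto (x - c) : EuclideanSpace ℝ (Fin d)) with hpdef
  set w : EuclideanSpace ℝ (Fin d) := x - c - p with hwdef
  have hwmem : w ∈ Vᗮ := Submodule.sub_starProjection_mem_orthogonal (K := V) (x - c)
  have hpmem : p ∈ V := (V.orthogonalProjectionOnto (x - c)).2
  have hpn : 0 < ‖p‖ := norm_pos_iff.mpr hP
  set S : Set (EuclideanSpace ℝ (Fin d)) := {y : EuclideanSpace ℝ (Fin d) | y - c ∈ V ∧ ‖y - c‖ = r} with hSdef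
  set A : ℝ := ‖w‖ ^ 2 + (‖p‖ - r) ^ 2 with hAdef
  have hA0 : 0 ≤ A := by positivity
  have key : ∀ y ∈ S, dist x y ^ 2 = ‖w‖ ^ 2 + ‖p - (y - c)‖ ^ 2 := by
    intro y hy
    have h1 : x - y = w + (p - (y - c)) := by rw [hwdef]; abel
    have h2 : (inner ℝ w (p - (y - c)) : ℝ) = 0 := by
      rw [real_inner_comm]
      exact (Submodule.mem_orthogonal V w).mp hwmem _ (V.sub_mem hpmem hy.1)
    rw [dist_eq_norm, h1, norm_add_sq_real, h2]
    ring
  -- the closest point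
  set v : EuclideanSpace ℝ (Fin d) := (r / ‖p‖) • p with hvdef
  set y₀ : EuclideanSpace ℝ (Fin d) := c + v with hydef
  have hy₀c : y₀ - c = v := by rw [hydef]; abel
  have hy₀S : y₀ ∈ S := by
    refine ⟨by rw [hy₀c]; exact V.smul_mem _ hpmem, ?_⟩
    rw [hy₀c, hvdef, norm_smul, Real.norm_eq_abs, abs_div, abs_of_pos hr,
      abs_of_pos hpn, div_mul_cancel₀]
    exact ne_of_gt hpn
  have hdist0 : dist x y₀ ^ 2 = A := by
    rw [key y₀ hy₀S, hy₀c, hAdef]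
    have : p - v = (1 - r / ‖p‖) • p := by
      rw [hvdef, sub_smul, one_smul]
    rw [this, norm_smul, Real.norm_eq_abs]
    have h1 : (|1 - r / ‖p‖| * ‖p‖) ^ 2 = ((1 - r / ‖p‖) * ‖p‖) ^ 2 := by
      rw [mul_pow, mul_pow, sq_abs]
    rw [h1]
    have h2 : (1 - r / ‖p‖) * ‖p‖ = ‖p‖ - r := by
      field_simp
    rw [h2]
  have hlow : ∀ y ∈ S, A ≤ dist x y ^ 2 := by
    intro y hy
    rw [key y hy, hAdef]
    have hcs : (inner ℝ p (y - c) : ℝ) ≤ ‖p‖ * ‖y - c‖ := real_inner_le_norm p (y - c)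
    have hns : ‖p - (y - c)‖ ^ 2 = ‖p‖ ^ 2 - 2 * (inner ℝ p (y - c) : ℝ) + ‖y - c‖ ^ 2 :=
      norm_sub_sq_real p (y - c)
    have hnr : ‖y - c‖ = r := hy.2
    nlinarith [hcs, hns, hnr]
  have hinf : Metric.infDist x S = Real.sqrt A := by
    apply le_antisymm
    · have : dist x y₀ = Real.sqrt A := by
        rw [← hdist0, Real.sqrt_sq dist_nonneg]
      rw [← this]
      exact Metric.infDist_le_dist_of_mem hy₀S
    · by_contra h
      push_neg at h
      obtain ⟨y, hy, hlt⟩ := (Metric.infDist_lt_iff ⟨y₀, hy₀S⟩).mp h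
      have h1 : A ≤ dist x y ^ 2 := hlow y hy
      have h2 : (0 : ℝ) ≤ dist x y := dist_nonneg
      nlinarith [Real.sq_sqrt hA0, Real.sqrt_nonneg A]
  rw [hinf, Real.sq_sqrt hA0]
end

section
/- With the SRCA loss L(c,r,I) = ∑ᵢ [(xᵢ − c)ᵀ(xᵢ − c) + r² − 2r √((xᵢ − c)ᵀ I_I (xᵢ − c))], suppose c* is a critical point of c ↦ L(c,r,I) (with r fixed) at which the square roots are all nonzero. Then for every coordinate j ∉ I, the j-th coordinate of c* equals the sample mean: c*_j = (1/n) ∑ᵢ (xᵢ)_j. -/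
/-!
For `j ∉ I`, moving the centre along the `j`-th basis vector leaves every square-root term of the
loss unchanged, so along that line the loss is the quadratic
`t ↦ L(c) - 2 t ∑ᵢ (xᵢ - c)_j + n t²`. Its derivative at `t = 0` must vanish at a critical point,
which says exactly that `c_j` is the mean of the `(xᵢ)_j`.
-/

open Finset

section SRCALoss

variable {ι κ : Type*} [DecidableEq ι]

theorem EuclideanSpace.sum_sq_sub_smul_single_of_notMem {I : Finset ι} {j : ι} (hj : j ∉ I)
    (y : EuclideanSpace ℝ ι) (t : ℝ) :
    ∑ k ∈ I, ((y - t • EuclideanSpace.single j (1 : ℝ)) k) ^ 2 = ∑ k ∈ I, (y k) ^ 2 := by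
  refine sum_congr rfl fun k hk => ?_
  simp [ne_of_mem_of_not_mem hk hj]

theorem EuclideanSpace.norm_sub_smul_single_sq [Fintype ι] (y : EuclideanSpace ℝ ι) (j : ι)
    (t : ℝ) :
    ‖y - t • EuclideanSpace.single j 1‖ ^ 2 = ‖y‖ ^ 2 - 2 * t * y j + t ^ 2 := by
  rw [norm_sub_sq_real, real_inner_smul_right, EuclideanSpace.inner_single_right, norm_smul,
    PiLp.norm_single]
  simp only [conj_trivial, one_mul, norm_one, mul_one, Real.norm_eq_abs, sq_abs]
  ring

variable [Fintype ι] [Fintype κ]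

noncomputable def srcaLoss (x : κ → EuclideanSpace ℝ ι) (I : Finset ι) (r : ℝ)
    (c : EuclideanSpace ℝ ι) : ℝ :=
  ∑ i, (‖x i - c‖ ^ 2 + r ^ 2 - 2 * r * Real.sqrt (∑ j ∈ I, ((x i - c) j) ^ 2))

theorem srcaLoss_add_smul_single (x : κ → EuclideanSpace ℝ ι) {I : Finset ι} (r : ℝ)
    (c : EuclideanSpace ℝ ι) {j : ι} (hj : j ∉ I) (t : ℝ) :
    srcaLoss x I r (c + t • EuclideanSpace.single j 1) =
      srcaLoss x I r c + (-2 * ∑ i, (x i - c) j) * t + Fintype.card κ * t ^ 2 := by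
  simp only [srcaLoss, ← sub_sub, EuclideanSpace.norm_sub_smul_single_sq,
    EuclideanSpace.sum_sq_sub_smul_single_of_notMem hj]
  rw [mul_sum, sum_mul, ← card_univ, ← nsmul_eq_mul, ← sum_const, ← sum_add_distrib,
    ← sum_add_distrib]
  exact sum_congr rfl fun i _ => by ring

theorem hasLineDerivAt_srcaLoss_single (x : κ → EuclideanSpace ℝ ι) {I : Finset ι} (r : ℝ)
    (c : EuclideanSpace ℝ ι) {j : ι} (hj : j ∉ I) :
    HasLineDerivAt ℝ (srcaLoss x I r) (-2 * ∑ i, (x i - c) j) c (EuclideanSpace.single j 1) := by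
  have hpoly : HasDerivAt (fun t : ℝ => srcaLoss x I r c + (-2 * ∑ i, (x i - c) j) * t
      + Fintype.card κ * t ^ 2) (-2 * ∑ i, (x i - c) j) 0 :=
    ((((hasDerivAt_id' (0 : ℝ)).const_mul (-2 * ∑ i, (x i - c) j)).const_add _).add
      ((hasDerivAt_pow 2 (0 : ℝ)).const_mul (Fintype.card κ : ℝ))).congr_deriv (by simp)
  unfold HasLineDerivAt
  simpa only [srcaLoss_add_smul_single x r c hj] using hpoly

theorem sum_sub_apply_eq_zero_of_hasFDerivAt_srcaLoss {x : κ → EuclideanSpace ℝ ι}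
    {I : Finset ι} {r : ℝ} {c : EuclideanSpace ℝ ι}
    (hcrit : HasFDerivAt (srcaLoss x I r) (0 : EuclideanSpace ℝ ι →L[ℝ] ℝ) c)
    {j : ι} (hj : j ∉ I) : ∑ i, (x i - c) j = 0 := by
  have h := (hcrit.hasLineDerivAt (EuclideanSpace.single j 1)).unique
    (hasLineDerivAt_srcaLoss_single x r c hj)
  simp only [zero_apply] at h
  linarith

end SRCALoss

theorem stmt4_general (d n : ℕ) (hn : 0 < n) (x : Fin n → EuclideanSpace ℝ (Fin d))
    (I : Finset (Fin d)) (r : ℝ) (cstar : EuclideanSpace ℝ (Fin d))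
    (hcrit : HasFDerivAt
      (fun c : EuclideanSpace ℝ (Fin d) =>
        ∑ i, (‖x i - c‖ ^ 2 + r ^ 2 -
          2 * r * Real.sqrt (∑ j ∈ I, ((x i - c) j) ^ 2)))
      (0 : EuclideanSpace ℝ (Fin d) →L[ℝ] ℝ) cstar) :
    ∀ j, j ∉ I → cstar j = (1 / n : ℝ) * ∑ i, x i j := by
  intro j hj
  have hsum := sum_sub_apply_eq_zero_of_hasFDerivAt_srcaLoss hcrit hj
  simp only [PiLp.sub_apply, sum_sub_distrib, sum_const, card_univ, Fintype.card_fin,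
    nsmul_eq_mul] at hsum
  have hn' : (n : ℝ) ≠ 0 := by positivity
  field_simp
  linarith

/-- At a critical point of the SRCA loss in c (with r, I fixed) where all square
roots are nonzero, the coordinates of the center outside I equal the sample mean. -/
theorem stmt4 (d n : ℕ) (hn : 0 < n) (x : Fin n → EuclideanSpace ℝ (Fin d))
    (I : Finset (Fin d)) (r : ℝ) (cstar : EuclideanSpace ℝ (Fin d))
    (hnz : ∀ i, (∑ j ∈ I, ((x i - cstar) j) ^ 2) ≠ 0)
    (hcrit : HasFDerivAt
      (fun c : EuclideanSpace ℝ (Fin d) =>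
        ∑ i, (‖x i - c‖ ^ 2 + r ^ 2 -
          2 * r * Real.sqrt (∑ j ∈ I, ((x i - c) j) ^ 2)))
      (0 : EuclideanSpace ℝ (Fin d) →L[ℝ] ℝ) cstar) :
    ∀ j, j ∉ I → cstar j = (1 / n : ℝ) * ∑ i, x i j :=
  stmt4_general d n hn x I r cstar hcrit
end
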